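/- arXiv:1704.04343 — 8 statements merged into one kernel-verified Lean document; each statement's English description precedes it below -/
import Mathlib

section
/- Let P be a finite set and L a linear space on P (each line a proper subset of P with at least two elements, and every pair of distinct points on exactly one line). If a ∈ P, l ∈ L and a ∉ l, then s_l ≤ k_a, i.e., the number of points on l is at most the number of lines through a. -/
/-! Every point `b` of `l` lies on a line through `a` (the line `ab`), and every line through `a`
differs from `l`, hence meets `l` in at most one point. Double counting the incidences between the
points of `l` and the lines through `a` gives `|l| ≤ k_a`. -/

open Finset

theorem inter_subsingleton_of_ne {α : Type*} {P : Finset α} {L : Finset (Finset α)}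
    (hsub : ∀ l ∈ L, l ⊆ P)
    (hpair : ∀ x ∈ P, ∀ y ∈ P, x ≠ y → ∃! l, l ∈ L ∧ x ∈ l ∧ y ∈ l)
    {l m : Finset α} (hl : l ∈ L) (hm : m ∈ L) (hlm : l ≠ m) :
    ((l : Set α) ∩ m).Subsingleton := by
  rintro x ⟨hxl, hxm⟩ y ⟨hyl, hym⟩
  by_contra hxy
  exact hlm <| (hpair x (hsub l hl hxl) y (hsub l hl hyl) hxy).unique
    ⟨hl, hxl, hyl⟩ ⟨hm, hxm, hym⟩

theorem line_card_le_lines_through_point_general {α : Type*} [DecidableEq α] (P : Finset α) (L : Finset (Finset α))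
    (hsub : ∀ l ∈ L, l ⊆ P)
    (hpair : ∀ x ∈ P, ∀ y ∈ P, x ≠ y → ∃! l, l ∈ L ∧ x ∈ l ∧ y ∈ l)
    (a : α) (ha : a ∈ P) (l : Finset α) (hl : l ∈ L) (hal : a ∉ l) :
    l.card ≤ (L.filter (fun l' => a ∈ l')).card := by
  refine card_le_card_of_forall_subsingleton (fun b m => b ∈ m) ?_ ?_
  · intro b hb
    have hab : a ≠ b := fun h => hal (h ▸ hb)
    obtain ⟨m, ⟨hm, ham, hbm⟩, -⟩ := hpair a ha b (hsub l hl hb) hab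
    exact ⟨m, mem_filter.2 ⟨hm, ham⟩, hbm⟩
  · intro m hm
    obtain ⟨hm, ham⟩ := mem_filter.1 hm
    exact inter_subsingleton_of_ne hsub hpair hl hm fun h => hal (h ▸ ham)

theorem line_card_le_lines_through_point {α : Type*} [DecidableEq α] (P : Finset α) (L : Finset (Finset α))
    (hsub : ∀ l ∈ L, l ⊆ P)
    (hproper : ∀ l ∈ L, l ≠ P)
    (hcard : ∀ l ∈ L, 2 ≤ l.card)
    (hpair : ∀ x ∈ P, ∀ y ∈ P, x ≠ y → ∃! l, l ∈ L ∧ x ∈ l ∧ y ∈ l)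
    (a : α) (ha : a ∈ P) (l : Finset α) (hl : l ∈ L) (hal : a ∉ l) :
    l.card ≤ (L.filter (fun l' => a ∈ l')).card :=
  line_card_le_lines_through_point_general P L hsub hpair a ha l hl hal
end

section
/- Let φ : I → 2^S be a finite family of subsets of a set S. Suppose that for every nonempty proper subset J of I, the union ⋃_{i∈J} φ_i has strictly more than |J| elements, and the union over all of I has at least |I| elements. Then for every j ∈ I and every a ∈ φ_j, there exists a system of distinct representatives f : I → S for φ (an injective map with f(i) ∈ φ_i for all i) such that f(j) = a. -/
theorem hall_corollary_prescribed_value {ι S : Type*} [DecidableEq S]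
    (I : Finset ι) (φ : ι → Finset S)
    (hstrict : ∀ J ⊆ I, J.Nonempty → J ≠ I → J.card < (J.biUnion φ).card)
    (hfull : I.card ≤ (I.biUnion φ).card)
    (j : ι) (hj : j ∈ I) (a : S) (ha : a ∈ φ j) :
    ∃ f : ι → S, Set.InjOn f ↑I ∧ (∀ i ∈ I, f i ∈ φ i) ∧ f j = a := by
  classical
  set K : Finset ι := I.erase j with hK
  have hall : ∀ s : Finset {x // x ∈ K},
      s.card ≤ (s.biUnion fun i => (φ i.1).erase a).card := by
    intro s
    rcases s.eq_empty_or_nonempty with rfl | hs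
    · simp
    set J : Finset ι := s.image Subtype.val with hJ
    have hJK : J ⊆ K := by
      intro x hx
      simp only [hJ, Finset.mem_image] at hx
      obtain ⟨⟨y, hy⟩, _, rfl⟩ := hx
      exact hy
    have hJI : J ⊆ I := hJK.trans (Finset.erase_subset _ _)
    have hjJ : j ∉ J := fun h => Finset.notMem_erase j I (hJK h)
    have hJne : J ≠ I := fun h => hjJ (h ▸ hj)
    have hJnon : J.Nonempty := hs.image _
    have hcard : s.card = J.card :=
      (Finset.card_image_of_injective s Subtype.coe_injective).symm
    have hlt := hstrict J hJI hJnon hJne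
    have hbi : s.biUnion (fun i => (φ i.1).erase a) = (J.biUnion φ).erase a := by
      ext x
      simp only [Finset.mem_biUnion, Finset.mem_erase, hJ, Finset.mem_image]
      constructor
      · rintro ⟨i, hi, hxa, hx⟩
        exact ⟨hxa, ⟨i.1, ⟨i, hi, rfl⟩, hx⟩⟩
      · rintro ⟨hxa, i, ⟨⟨y, hy⟩, hmem, rfl⟩, hx⟩
        exact ⟨⟨y, hy⟩, hmem, hxa, hx⟩
    rw [hbi, hcard]
    have := Finset.card_erase_le (a := a) (s := J.biUnion φ)
    have h2 : J.card + 1 ≤ (J.biUnion φ).card := hlt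
    have h3 : (J.biUnion φ).card - 1 ≤ ((J.biUnion φ).erase a).card :=
      Finset.pred_card_le_card_erase
    omega
  obtain ⟨g, hginj, hgmem⟩ :=
    (Finset.all_card_le_biUnion_card_iff_existsInjective'
      (fun i : {x // x ∈ K} => (φ i.1).erase a)).mp hall
  refine ⟨fun i => if h : i ∈ K then g ⟨i, h⟩ else a, ?_, ?_, ?_⟩
  · intro x hx y hy hxy
    simp only [Finset.coe_mem] at *
    by_cases hxK : x ∈ K <;> by_cases hyK : y ∈ K <;>
      simp only [hxK, hyK, dif_pos, dif_neg, not_false_iff] at hxy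
    · exact congrArg Subtype.val (hginj hxy)
    · exact absurd hxy (Finset.ne_of_mem_erase (hgmem ⟨x, hxK⟩))
    · exact absurd hxy.symm (Finset.ne_of_mem_erase (hgmem ⟨y, hyK⟩))
    · have hx' : x = j := by
        by_contra h; exact hxK (Finset.mem_erase.mpr ⟨h, hx⟩)
      have hy' : y = j := by
        by_contra h; exact hyK (Finset.mem_erase.mpr ⟨h, hy⟩)
      rw [hx', hy']
  · intro i hi
    by_cases hiK : i ∈ K
    · simpa [hiK] using Finset.mem_of_mem_erase (hgmem ⟨i, hiK⟩)
    · have : i = j := by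
        by_contra h; exact hiK (Finset.mem_erase.mpr ⟨h, hi⟩)
      subst this
      simp only [dif_neg hiK]
      exact ha
  · simp [hK]
end

section
/- Let P be a finite set with n elements and L a linear space on P with exactly n lines. If some point a ∈ P is contained in n − 1 lines, then there exists a point z ∈ P (namely z = a) such that L consists of the set P \ {z} together with all pairs {x, z} for x ≠ z. -/
theorem near_pencil_of_point_on_all_but_one_line {α : Type*} [DecidableEq α] (P : Finset α) (L : Finset (Finset α))
    (hsub : ∀ l ∈ L, l ⊆ P)
    (hproper : ∀ l ∈ L, l ≠ P)
    (hcard : ∀ l ∈ L, 2 ≤ l.card)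
    (hpair : ∀ x ∈ P, ∀ y ∈ P, x ≠ y → ∃! l, l ∈ L ∧ x ∈ l ∧ y ∈ l)
    (hm : L.card = P.card)
    (a : α) (ha : a ∈ P)
    (hka : (L.filter (fun l => a ∈ l)).card = P.card - 1) :
    ∃ z ∈ P, L = insert (P.erase z) ((P.erase z).image (fun x => ({x, z} : Finset α))) := by
  classical
  have hPpos : 0 < P.card := Finset.card_pos.mpr ⟨a, ha⟩
  have hLne : L.Nonempty := by
    rw [← Finset.card_pos, hm]; exact hPpos
  obtain ⟨l₁, hl₁⟩ := hLne
  have hn3 : 3 ≤ P.card := by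
    have h1 : l₁ ⊂ P := Finset.ssubset_iff_subset_ne.mpr ⟨hsub _ hl₁, hproper _ hl₁⟩
    have h2 := Finset.card_lt_card h1
    have h3 := hcard _ hl₁
    omega
  have hsplit := Finset.card_filter_add_card_filter_not (s := L)
    (p := fun l => a ∈ l)
  have hb1 : (L.filter (fun l => ¬ a ∈ l)).card = 1 := by omega
  obtain ⟨l₀, hl₀⟩ := Finset.card_eq_one.mp hb1
  have hl₀L : l₀ ∈ L ∧ a ∉ l₀ := by
    have : l₀ ∈ L.filter (fun l => ¬ a ∈ l) := by rw [hl₀]; exact Finset.mem_singleton_self _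
    simpa using this
  -- the unique line through x and a, for x ≠ a in P
  have hfex : ∀ x, x ∈ P → x ≠ a → ∃ l, l ∈ L ∧ x ∈ l ∧ a ∈ l := fun x hx hxa =>
    (hpair x hx a ha hxa).exists
  have hfuniq : ∀ x, x ∈ P → x ≠ a → ∀ l l', (l ∈ L ∧ x ∈ l ∧ a ∈ l) →
      (l' ∈ L ∧ x ∈ l' ∧ a ∈ l') → l = l' := by
    intro x hx hxa l l' h h'
    obtain ⟨w, -, hu⟩ := hpair x hx a ha hxa
    rw [hu l h, hu l' h']
  set f : ∀ x ∈ P.erase a, Finset α := fun x hx =>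
    (hfex x (Finset.mem_of_mem_erase hx) (Finset.ne_of_mem_erase hx)).choose with hfdef
  have hf : ∀ x (hx : x ∈ P.erase a), f x hx ∈ L ∧ x ∈ f x hx ∧ a ∈ f x hx := fun x hx =>
    (hfex x (Finset.mem_of_mem_erase hx) (Finset.ne_of_mem_erase hx)).choose_spec
  have hfmem : ∀ x (hx : x ∈ P.erase a), f x hx ∈ L.filter (fun l => a ∈ l) := by
    intro x hx
    simp only [Finset.mem_filter]
    exact ⟨(hf x hx).1, (hf x hx).2.2⟩
  have hfsurj : ∀ l ∈ L.filter (fun l => a ∈ l), ∃ x hx, f x hx = l := by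
    intro l hl
    rw [Finset.mem_filter] at hl
    obtain ⟨x, hxl, hxa⟩ := Finset.exists_mem_ne (s := l) (by have := hcard l hl.1; omega) a
    have hxP : x ∈ P := hsub l hl.1 hxl
    have hxe : x ∈ P.erase a := Finset.mem_erase.mpr ⟨hxa, hxP⟩
    exact ⟨x, hxe, hfuniq x hxP hxa _ _ (hf x hxe) ⟨hl.1, hxl, hl.2⟩⟩
  have hcards : (P.erase a).card ≤ (L.filter (fun l => a ∈ l)).card := by
    rw [hka, Finset.card_erase_of_mem ha]
  have hinj := Finset.inj_on_of_surj_on_of_card_le f hfmem hfsurj hcards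
  -- every line through a is a pair {x, a}
  have hLa : ∀ l ∈ L, a ∈ l → ∃ x ∈ P.erase a, l = {x, a} := by
    intro l hl hal
    obtain ⟨x, hxl, hxa⟩ := Finset.exists_mem_ne (s := l) (by have := hcard l hl; omega) a
    have hxP : x ∈ P := hsub l hl hxl
    have hxe : x ∈ P.erase a := Finset.mem_erase.mpr ⟨hxa, hxP⟩
    refine ⟨x, hxe, ?_⟩
    apply Finset.Subset.antisymm
    · intro y hyl
      rcases eq_or_ne y a with rfl | hya
      · simp
      have hyP : y ∈ P := hsub l hl hyl
      have hye : y ∈ P.erase a := Finset.mem_erase.mpr ⟨hya, hyP⟩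
      have hfx : f x hxe = l := hfuniq x hxP hxa _ _ (hf x hxe) ⟨hl, hxl, hal⟩
      have hfy : f y hye = l := hfuniq y hyP hya _ _ (hf y hye) ⟨hl, hyl, hal⟩
      have : y = x := hinj hye hxe (by rw [hfx, hfy])
      simp [this]
    · intro y hy
      simp only [Finset.mem_insert, Finset.mem_singleton] at hy
      rcases hy with rfl | rfl
      · exact hxl
      · exact hal
  -- each pair {x, a} is a line
  have hpairline : ∀ x ∈ P.erase a, ({x, a} : Finset α) ∈ L := by
    intro x hxe
    have hxP := Finset.mem_of_mem_erase hxe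
    have hxa := Finset.ne_of_mem_erase hxe
    obtain ⟨l, hl, hxl, hal⟩ := hfex x hxP hxa
    obtain ⟨y, hye, hly⟩ := hLa l hl hal
    have : x = y := by
      rw [hly] at hxl
      simp only [Finset.mem_insert, Finset.mem_singleton] at hxl
      tauto
    rw [this.symm] at hly
    rwa [← hly]
  -- l₀ = P.erase a
  have hl₀eq : l₀ = P.erase a := by
    apply Finset.Subset.antisymm
    · intro y hy
      exact Finset.mem_erase.mpr ⟨fun h => hl₀L.2 (h ▸ hy), hsub _ hl₀L.1 hy⟩
    · intro x hxe
      have hxP := Finset.mem_of_mem_erase hxe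
      have hxa := Finset.ne_of_mem_erase hxe
      -- find y ∈ P, y ≠ x, y ≠ a
      have hss : ({x, a} : Finset α) ⊂ P := by
        apply Finset.ssubset_iff_subset_ne.mpr
        constructor
        · intro y hy
          simp only [Finset.mem_insert, Finset.mem_singleton] at hy
          rcases hy with rfl | rfl <;> assumption
        · intro h
          have h2 : ({x, a} : Finset α).card ≤ 2 :=
            le_trans (Finset.card_insert_le _ _) (by simp)
          rw [h] at h2
          omega
      obtain ⟨y, hyP, hyxa⟩ := Finset.exists_of_ssubset hss
      simp only [Finset.mem_insert, Finset.mem_singleton, not_or] at hyxa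
      obtain ⟨l, ⟨hl, hxl, hyl⟩, -⟩ := hpair x hxP y hyP (fun h => hyxa.1 h.symm)
      have hal : a ∉ l := by
        intro hal
        obtain ⟨z, hze, hlz⟩ := hLa l hl hal
        rw [hlz] at hxl hyl
        simp only [Finset.mem_insert, Finset.mem_singleton] at hxl hyl
        rcases hxl with rfl | rfl
        · rcases hyl with rfl | rfl
          · exact hyxa.1 rfl
          · exact hyxa.2 rfl
        · exact hxa rfl
      have : l ∈ L.filter (fun l => ¬ a ∈ l) := Finset.mem_filter.mpr ⟨hl, hal⟩
      rw [hl₀, Finset.mem_singleton] at this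
      rw [this] at hxl
      exact hxl
  refine ⟨a, ha, ?_⟩
  ext l
  simp only [Finset.mem_insert, Finset.mem_image]
  constructor
  · intro hl
    by_cases hal : a ∈ l
    · obtain ⟨x, hxe, hlx⟩ := hLa l hl hal
      exact Or.inr ⟨x, hxe, hlx.symm⟩
    · have : l ∈ L.filter (fun l => ¬ a ∈ l) := Finset.mem_filter.mpr ⟨hl, hal⟩
      rw [hl₀, Finset.mem_singleton] at this
      exact Or.inl (this.trans hl₀eq)
  · rintro (rfl | ⟨x, hxe, rfl⟩)
    · rw [← hl₀eq]; exact hl₀L.1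
    · exact hpairline x hxe
end

section
/- Let P be a finite set with n elements and L a linear space on P with exactly n lines. Suppose P = l ∪ l' for two lines l, l' with nonempty intersection. Then there exists a point z ∈ P such that L consists of P \ {z} together with all pairs {x, z}, x ≠ z (a near-pencil). -/
private lemma near_pencil_aux {α : Type*} [DecidableEq α] (P : Finset α) (L : Finset (Finset α))
    (hsub : ∀ l ∈ L, l ⊆ P)
    (hcard : ∀ l ∈ L, 2 ≤ l.card)
    (hpair : ∀ x ∈ P, ∀ y ∈ P, x ≠ y → ∃! l, l ∈ L ∧ x ∈ l ∧ y ∈ l)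
    (l l' : Finset α) (hl : l ∈ L) (hl' : l' ∈ L) (hne : l ≠ l')
    (hcover : P = l ∪ l') (hint : (l ∩ l').Nonempty) (h2 : l'.card = 2) :
    ∃ z ∈ P, L = insert (P.erase z) ((P.erase z).image (fun x => ({x, z} : Finset α))) := by
  obtain ⟨w, hw⟩ := hint
  rw [Finset.mem_inter] at hw
  obtain ⟨hwl, hwl'⟩ := hw
  have uniq : ∀ m ∈ L, ∀ m' ∈ L, ∀ x y : α, x ≠ y → x ∈ m → y ∈ m → x ∈ m' → y ∈ m' →
      m = m' := by
    intro m hm m' hm' x y hxy hxm hym hxm' hym'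
    obtain ⟨n, -, hn⟩ := hpair x (hsub m hm hxm) y (hsub m hm hym) hxy
    rw [hn m ⟨hm, hxm, hym⟩, hn m' ⟨hm', hxm', hym'⟩]
  -- extract z with l' = {w, z}
  have hz : ∃ z, z ≠ w ∧ l' = {w, z} := by
    obtain ⟨u, v, huv, he⟩ := Finset.card_eq_two.mp h2
    rw [he] at hwl'
    simp only [Finset.mem_insert, Finset.mem_singleton] at hwl'
    rcases hwl' with rfl | rfl
    · exact ⟨v, huv.symm, he⟩
    · exact ⟨u, huv, by rw [he, Finset.pair_comm]⟩
  obtain ⟨z, hzw, hl'pair⟩ := hz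
  have hzl' : z ∈ l' := by simp [hl'pair]
  have hzP : z ∈ P := hsub l' hl' hzl'
  have hzl : z ∉ l := by
    intro hzl
    exact hne (uniq l hl l' hl' w z hzw.symm hwl hzl hwl' hzl')
  have hlP : l = P.erase z := by
    ext a
    simp only [Finset.mem_erase]
    constructor
    · intro ha
      exact ⟨fun h => hzl (h ▸ ha), hsub l hl ha⟩
    · rintro ⟨haz, haP⟩
      rw [hcover] at haP
      rcases Finset.mem_union.mp haP with h | h
      · exact h
      · rw [hl'pair] at h
        simp only [Finset.mem_insert, Finset.mem_singleton] at h
        rcases h with rfl | rfl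
        · exact hwl
        · exact absurd rfl haz
  -- classification of lines
  have hclass : ∀ m ∈ L, m = l ∨ ∃ x ∈ l, m = {x, z} := by
    intro m hm
    by_cases hml : m = l
    · exact Or.inl hml
    by_cases hml' : m = l'
    · exact Or.inr ⟨w, hwl, by rw [hml', hl'pair]⟩
    right
    have hzm : z ∈ m := by
      by_contra hzm
      -- then m ⊆ l, and m has two points, so m = l
      have hsubl : m ⊆ l := by
        intro p hp
        have hpP := hsub m hm hp
        rw [hcover] at hpP
        rcases Finset.mem_union.mp hpP with h | h
        · exact h
        · rw [hl'pair] at h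
          simp only [Finset.mem_insert, Finset.mem_singleton] at h
          rcases h with rfl | rfl
          · exact hwl
          · exact absurd hp hzm
      obtain ⟨x, hx, y, hy, hxy⟩ := Finset.one_lt_card.mp (hcard m hm)
      exact hml (uniq m hm l hl x y hxy hx hy (hsubl hx) (hsubl hy))
    -- there is a second point x ≠ z in m, and x ∈ l
    have hx : ∃ x ∈ m, x ≠ z := by
      obtain ⟨x, hx, y, hy, hxy⟩ := Finset.one_lt_card.mp (hcard m hm)
      by_cases h : x = z
      · exact ⟨y, hy, fun hh => hxy (h.trans hh.symm)⟩
      · exact ⟨x, hx, h⟩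
    obtain ⟨x, hxm, hxz⟩ := hx
    have hxl : x ∈ l := by
      have hpP := hsub m hm hxm
      rw [hcover] at hpP
      rcases Finset.mem_union.mp hpP with h | h
      · exact h
      · rw [hl'pair] at h
        simp only [Finset.mem_insert, Finset.mem_singleton] at h
        rcases h with rfl | rfl
        · exact absurd (uniq m hm l' hl' x z hxz hxm hzm hwl' hzl') hml'
        · exact absurd rfl hxz
    refine ⟨x, hxl, Finset.Subset.antisymm ?_ ?_⟩
    · intro p hp
      simp only [Finset.mem_insert, Finset.mem_singleton]
      by_cases hpz : p = z
      · exact Or.inr hpz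
      have hpl : p ∈ l := by
        have hpP := hsub m hm hp
        rw [hcover] at hpP
        rcases Finset.mem_union.mp hpP with h | h
        · exact h
        · rw [hl'pair] at h
          simp only [Finset.mem_insert, Finset.mem_singleton] at h
          rcases h with rfl | rfl
          · exact absurd (uniq m hm l' hl' p z hpz hp hzm hwl' hzl') hml'
          · exact absurd rfl hpz
      by_cases hpx : p = x
      · exact Or.inl hpx
      · exact absurd (uniq m hm l hl p x hpx hp hxm hpl hxl) hml
    · intro p hp
      simp only [Finset.mem_insert, Finset.mem_singleton] at hp
      rcases hp with rfl | rfl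
      · exact hxm
      · exact hzm
  -- every pair {x, z} with x ∈ l is a line
  have hmem : ∀ x ∈ l, ({x, z} : Finset α) ∈ L := by
    intro x hxl
    have hxz : x ≠ z := fun h => hzl (h ▸ hxl)
    obtain ⟨m, ⟨hmL, hxm, hzm⟩, -⟩ := hpair x (hsub l hl hxl) z hzP hxz
    rcases hclass m hmL with rfl | ⟨x', hx', he⟩
    · exact absurd hzm hzl
    · have : x' = x := by
        subst he
        simp only [Finset.mem_insert, Finset.mem_singleton] at hxm
        rcases hxm with h | h
        · exact h.symm
        · exact absurd h hxz
      subst this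
      exact he ▸ hmL
  refine ⟨z, hzP, ?_⟩
  rw [← hlP]
  ext m
  simp only [Finset.mem_insert, Finset.mem_image]
  constructor
  · intro hm
    rcases hclass m hm with h | ⟨x, hx, he⟩
    · exact Or.inl h
    · exact Or.inr ⟨x, hx, he.symm⟩
  · rintro (rfl | ⟨x, hx, rfl⟩)
    · exact hl
    · exact hmem x hx

theorem near_pencil_of_union_two_lines {α : Type*} [DecidableEq α] (P : Finset α) (L : Finset (Finset α))
    (hsub : ∀ l ∈ L, l ⊆ P)
    (hproper : ∀ l ∈ L, l ≠ P)
    (hcard : ∀ l ∈ L, 2 ≤ l.card)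
    (hpair : ∀ x ∈ P, ∀ y ∈ P, x ≠ y → ∃! l, l ∈ L ∧ x ∈ l ∧ y ∈ l)
    (hm : L.card = P.card)
    (l l' : Finset α) (hl : l ∈ L) (hl' : l' ∈ L) (hne : l ≠ l')
    (hcover : P = l ∪ l') (hint : (l ∩ l').Nonempty) :
    ∃ z ∈ P, L = insert (P.erase z) ((P.erase z).image (fun x => ({x, z} : Finset α))) := by
  obtain ⟨w, hw⟩ := hint
  rw [Finset.mem_inter] at hw
  obtain ⟨hwl, hwl'⟩ := hw
  have uniq : ∀ m ∈ L, ∀ m' ∈ L, ∀ x y : α, x ≠ y → x ∈ m → y ∈ m → x ∈ m' → y ∈ m' →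
      m = m' := by
    intro m hm' m' hm'' x y hxy hxm hym hxm' hym'
    obtain ⟨n, -, hn⟩ := hpair x (hsub m hm' hxm) y (hsub m hm' hym) hxy
    rw [hn m ⟨hm', hxm, hym⟩, hn m' ⟨hm'', hxm', hym'⟩]
  -- it suffices to show l.card = 2 or l'.card = 2
  suffices hs : l.card = 2 ∨ l'.card = 2 by
    rcases hs with h | h
    · exact near_pencil_aux P L hsub hcard hpair l' l hl' hl hne.symm
        (by rw [hcover, Finset.union_comm]) ⟨w, Finset.mem_inter.mpr ⟨hwl', hwl⟩⟩ h
    · exact near_pencil_aux P L hsub hcard hpair l l' hl hl' hne hcover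
        ⟨w, Finset.mem_inter.mpr ⟨hwl, hwl'⟩⟩ h
  set A := l.erase w with hA
  set B := l'.erase w with hB
  -- membership facts
  have hAl' : ∀ x ∈ A, x ∉ l' := by
    intro x hx hxl'
    obtain ⟨hxw, hxl⟩ := Finset.mem_erase.mp hx
    exact hne (uniq l hl l' hl' x w hxw hxl hwl hxl' hwl')
  have hBl : ∀ y ∈ B, y ∉ l := by
    intro y hy hyl
    obtain ⟨hyw, hyl'⟩ := Finset.mem_erase.mp hy
    exact hne (uniq l hl l' hl' y w hyw hyl hwl hyl' hwl')
  -- structure of L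
  have hL : L = insert l (insert l' ((A ×ˢ B).image (fun p => ({p.1, p.2} : Finset α)))) := by
    ext m
    simp only [Finset.mem_insert, Finset.mem_image, Finset.mem_product]
    constructor
    · intro hmL
      by_cases hml : m = l
      · exact Or.inl hml
      by_cases hml' : m = l'
      · exact Or.inr (Or.inl hml')
      right; right
      -- find x ∈ m with x ∉ l'
      have hx : ∃ x ∈ m, x ∉ l' := by
        by_contra hc
        push_neg at hc
        obtain ⟨x, hxm, y, hym, hxy⟩ := Finset.one_lt_card.mp (hcard m hmL)
        exact hml' (uniq m hmL l' hl' x y hxy hxm hym (hc x hxm) (hc y hym))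
      have hy : ∃ y ∈ m, y ∉ l := by
        by_contra hc
        push_neg at hc
        obtain ⟨x, hxm, y, hym, hxy⟩ := Finset.one_lt_card.mp (hcard m hmL)
        exact hml (uniq m hmL l hl x y hxy hxm hym (hc x hxm) (hc y hym))
      obtain ⟨x, hxm, hxl'⟩ := hx
      obtain ⟨y, hym, hyl⟩ := hy
      have hxl : x ∈ l := by
        have := hsub m hmL hxm
        rw [hcover] at this
        rcases Finset.mem_union.mp this with h | h
        · exact h
        · exact absurd h hxl'
      have hyl' : y ∈ l' := by
        have := hsub m hmL hym
        rw [hcover] at this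
        rcases Finset.mem_union.mp this with h | h
        · exact absurd h hyl
        · exact h
      have hxy : x ≠ y := fun h => hyl (h ▸ hxl)
      have hxw : x ≠ w := fun h => hxl' (h ▸ hwl')
      have hyw : y ≠ w := fun h => hyl (h ▸ hwl)
      refine ⟨(x, y), ⟨Finset.mem_erase.mpr ⟨hxw, hxl⟩, Finset.mem_erase.mpr ⟨hyw, hyl'⟩⟩, ?_⟩
      refine Finset.Subset.antisymm ?_ ?_
      · intro p hp
        simp only [Finset.mem_insert, Finset.mem_singleton] at hp
        rcases hp with rfl | rfl
        · exact hxm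
        · exact hym
      · intro p hp
        simp only [Finset.mem_insert, Finset.mem_singleton]
        have := hsub m hmL hp
        rw [hcover] at this
        rcases Finset.mem_union.mp this with h | h
        · by_cases hpx : p = x
          · exact Or.inl hpx
          · exact absurd (uniq m hmL l hl p x hpx hp hxm h hxl) hml
        · by_cases hpy : p = y
          · exact Or.inr hpy
          · exact absurd (uniq m hmL l' hl' p y hpy hp hym h hyl') hml'
    · rintro (rfl | rfl | ⟨⟨x, y⟩, ⟨hx, hy⟩, rfl⟩)
      · exact hl
      · exact hl'
      · -- the pair {x,y} is the line through x and y
        obtain ⟨hxw, hxl⟩ := Finset.mem_erase.mp hx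
        obtain ⟨hyw, hyl'⟩ := Finset.mem_erase.mp hy
        have hxl' : x ∉ l' := hAl' x hx
        have hyl : y ∉ l := hBl y hy
        have hxy : x ≠ y := fun h => hyl (h ▸ hxl)
        obtain ⟨m, ⟨hmL, hxm, hym⟩, -⟩ :=
          hpair x (hsub l hl hxl) y (hsub l' hl' hyl') hxy
        have hme : m = {x, y} := by
          refine Finset.Subset.antisymm ?_ ?_
          · intro p hp
            simp only [Finset.mem_insert, Finset.mem_singleton]
            have := hsub m hmL hp
            rw [hcover] at this
            rcases Finset.mem_union.mp this with h | h
            · by_cases hpx : p = x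
              · exact Or.inl hpx
              · have hml : m = l := uniq m hmL l hl p x hpx hp hxm h hxl
                exact absurd (hml ▸ hym) hyl
            · by_cases hpy : p = y
              · exact Or.inr hpy
              · have hml' : m = l' := uniq m hmL l' hl' p y hpy hp hym h hyl'
                exact absurd (hml' ▸ hxm) hxl'
          · intro p hp
            simp only [Finset.mem_insert, Finset.mem_singleton] at hp
            rcases hp with rfl | rfl
            · exact hxm
            · exact hym
        exact hme ▸ hmL
  -- counting
  have hcardA : 1 ≤ A.card := by
    have := hcard l hl
    have : 1 ≤ l.card - 1 := by omega
    rwa [← Finset.card_erase_of_mem hwl] at this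
  have hcardB : 1 ≤ B.card := by
    have := hcard l' hl'
    have : 1 ≤ l'.card - 1 := by omega
    rwa [← Finset.card_erase_of_mem hwl'] at this
  have hinj : Set.InjOn (fun p : α × α => ({p.1, p.2} : Finset α)) ↑(A ×ˢ B) := by
    rintro ⟨x, y⟩ hxy ⟨x', y'⟩ hxy' he
    simp only [Finset.coe_product, Set.mem_prod, Finset.mem_coe] at hxy hxy'
    obtain ⟨hx, hy⟩ := hxy
    obtain ⟨hx', hy'⟩ := hxy'
    simp only at he
    have hx'm : x' ∈ ({x, y} : Finset α) := by rw [he]; simp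
    have hy'm : y' ∈ ({x, y} : Finset α) := by rw [he]; simp
    simp only [Finset.mem_insert, Finset.mem_singleton] at hx'm hy'm
    have hxx' : x' = x := by
      rcases hx'm with h | h
      · exact h
      · exact absurd (h ▸ (Finset.mem_erase.mp hx').2) (hBl y hy)
    have hyy' : y' = y := by
      rcases hy'm with h | h
      · exact absurd (h ▸ (Finset.mem_erase.mp hy').2) (hAl' x hx)
      · exact h
    simp [hxx', hyy']
  have hlnotin : l ∉ insert l' ((A ×ˢ B).image (fun p => ({p.1, p.2} : Finset α))) := by
    simp only [Finset.mem_insert, Finset.mem_image, Finset.mem_product, not_or]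
    refine ⟨hne, ?_⟩
    rintro ⟨⟨x, y⟩, ⟨hx, hy⟩, he⟩
    have : y ∈ l := by rw [← he]; simp
    exact hBl y hy this
  have hl'notin : l' ∉ (A ×ˢ B).image (fun p => ({p.1, p.2} : Finset α)) := by
    simp only [Finset.mem_image, Finset.mem_product]
    rintro ⟨⟨x, y⟩, ⟨hx, hy⟩, he⟩
    have : x ∈ l' := by rw [← he]; simp
    exact hAl' x hx this
  have hLcard : L.card = A.card * B.card + 2 := by
    rw [hL, Finset.card_insert_of_notMem hlnotin, Finset.card_insert_of_notMem hl'notin,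
      Finset.card_image_of_injOn hinj, Finset.card_product]
  have hPcard : P.card = A.card + B.card + 1 := by
    have hll' : l ∩ l' = {w} := by
      refine Finset.Subset.antisymm ?_ ?_
      · intro p hp
        rw [Finset.mem_inter] at hp
        simp only [Finset.mem_singleton]
        by_contra hpw
        exact hne (uniq l hl l' hl' p w hpw hp.1 hwl hp.2 hwl')
      · intro p hp
        simp only [Finset.mem_singleton] at hp
        subst hp
        exact Finset.mem_inter.mpr ⟨hwl, hwl'⟩
    have hu : (l ∪ l').card + (l ∩ l').card = l.card + l'.card :=
      Finset.card_union_add_card_inter l l'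
    rw [hll', Finset.card_singleton, ← hcover] at hu
    have hAc : A.card = l.card - 1 := Finset.card_erase_of_mem hwl
    have hBc : B.card = l'.card - 1 := Finset.card_erase_of_mem hwl'
    have h2l := hcard l hl
    have h2l' := hcard l' hl'
    omega
  rw [hLcard, hPcard] at hm
  -- A.card * B.card + 2 = A.card + B.card + 1, with both ≥ 1
  have : A.card = 1 ∨ B.card = 1 := by
    by_contra hc
    push_neg at hc
    have h2A : 2 ≤ A.card := by omega
    have h2B : 2 ≤ B.card := by omega
    nlinarith
  have hAc : A.card = l.card - 1 := Finset.card_erase_of_mem hwl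
  have hBc : B.card = l'.card - 1 := Finset.card_erase_of_mem hwl'
  have h2l := hcard l hl
  have h2l' := hcard l' hl'
  rcases this with h | h
  · left; omega
  · right; omega
end

section
/- Let P be a finite set and L a linear space on P, and suppose l, l' are distinct lines with l ∩ l' = {z} and P = l ∪ l'. If |l| ≥ |l'| ≥ 3, then the number of lines is at least 2 + (|l| − 1)(|l'| − 1) ≥ |P| + 1. -/
theorem lines_count_lower_bound {α : Type*} [DecidableEq α] (P : Finset α) (L : Finset (Finset α))
    (hsub : ∀ l ∈ L, l ⊆ P)
    (hproper : ∀ l ∈ L, l ≠ P)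
    (hcard : ∀ l ∈ L, 2 ≤ l.card)
    (hpair : ∀ x ∈ P, ∀ y ∈ P, x ≠ y → ∃! l, l ∈ L ∧ x ∈ l ∧ y ∈ l)
    (l l' : Finset α) (hl : l ∈ L) (hl' : l' ∈ L) (hne : l ≠ l')
    (z : α) (hint : l ∩ l' = {z}) (hcover : P = l ∪ l')
    (h3 : 3 ≤ l'.card) (hle : l'.card ≤ l.card) :
    2 + (l.card - 1) * (l'.card - 1) ≤ L.card ∧
      P.card + 1 ≤ 2 + (l.card - 1) * (l'.card - 1) := by
  classical
  have hzl : z ∈ l := by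
    have : z ∈ l ∩ l' := by rw [hint]; simp
    exact (Finset.mem_inter.1 this).1
  have hzl' : z ∈ l' := by
    have : z ∈ l ∩ l' := by rw [hint]; simp
    exact (Finset.mem_inter.1 this).2
  -- key uniqueness facts
  have hdom : ∀ p : α × α, p ∈ (l.erase z) ×ˢ (l'.erase z) →
      p.1 ∈ P ∧ p.2 ∈ P ∧ p.1 ≠ p.2 := by
    intro p hp
    rw [Finset.mem_product] at hp
    obtain ⟨h1, h2⟩ := hp
    have h1' := Finset.mem_of_mem_erase h1
    have h2' := Finset.mem_of_mem_erase h2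
    refine ⟨hsub l hl h1', hsub l' hl' h2', ?_⟩
    intro heq
    have : p.1 ∈ l ∩ l' := Finset.mem_inter.2 ⟨h1', heq ▸ h2'⟩
    rw [hint, Finset.mem_singleton] at this
    exact (Finset.ne_of_mem_erase h1) this
  -- choice function
  set f : α × α → Finset α := fun p =>
    if h : ∃ m, m ∈ L ∧ p.1 ∈ m ∧ p.2 ∈ m then h.choose else ∅ with hf
  have hfspec : ∀ p : α × α, p ∈ (l.erase z) ×ˢ (l'.erase z) →
      f p ∈ L ∧ p.1 ∈ f p ∧ p.2 ∈ f p := by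
    intro p hp
    obtain ⟨h1, h2, h3'⟩ := hdom p hp
    obtain ⟨m, hm, _⟩ := hpair p.1 h1 p.2 h2 h3'
    have hex : ∃ m, m ∈ L ∧ p.1 ∈ m ∧ p.2 ∈ m := ⟨m, hm⟩
    simp only [hf, dif_pos hex]
    exact hex.choose_spec
  have hfinj : Set.InjOn f ((l.erase z) ×ˢ (l'.erase z) : Finset (α × α)) := by
    intro p hp q hq heq
    simp only [Finset.coe_mem, Finset.mem_coe] at hp hq
    have hps := hfspec p hp
    have hqs := hfspec q hq
    rw [Finset.mem_product] at hp hq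
    have h1 : p.1 = q.1 := by
      by_contra hne1
      -- f p contains p.1 and q.1, both in l, distinct; so f p = l by uniqueness
      have hp1P := hsub l hl (Finset.mem_of_mem_erase hp.1)
      have hq1P := hsub l hl (Finset.mem_of_mem_erase hq.1)
      obtain ⟨m, hm, huniq⟩ := hpair p.1 hp1P q.1 hq1P hne1
      have e1 : f p = m := huniq _ ⟨hps.1, hps.2.1, heq ▸ hqs.2.1⟩
      have e2 : l = m := huniq _ ⟨hl, Finset.mem_of_mem_erase hp.1,
        Finset.mem_of_mem_erase hq.1⟩
      have : p.2 ∈ l ∩ l' :=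
        Finset.mem_inter.2 ⟨e2 ▸ e1 ▸ hps.2.2, Finset.mem_of_mem_erase hp.2⟩
      rw [hint, Finset.mem_singleton] at this
      exact (Finset.ne_of_mem_erase hp.2) this
    have h2 : p.2 = q.2 := by
      by_contra hne2
      have hp2P := hsub l' hl' (Finset.mem_of_mem_erase hp.2)
      have hq2P := hsub l' hl' (Finset.mem_of_mem_erase hq.2)
      obtain ⟨m, hm, huniq⟩ := hpair p.2 hp2P q.2 hq2P hne2
      have e1 : f p = m := huniq _ ⟨hps.1, hps.2.2, heq ▸ hqs.2.2⟩
      have e2 : l' = m := huniq _ ⟨hl', Finset.mem_of_mem_erase hp.2,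
        Finset.mem_of_mem_erase hq.2⟩
      have : p.1 ∈ l ∩ l' :=
        Finset.mem_inter.2 ⟨Finset.mem_of_mem_erase hp.1, e2 ▸ e1 ▸ hps.2.1⟩
      rw [hint, Finset.mem_singleton] at this
      exact (Finset.ne_of_mem_erase hp.1) this
    exact Prod.ext h1 h2
  set S : Finset (Finset α) := ((l.erase z) ×ˢ (l'.erase z)).image f with hS
  have hScard : S.card = (l.card - 1) * (l'.card - 1) := by
    rw [hS, Finset.card_image_of_injOn hfinj, Finset.card_product,
      Finset.card_erase_of_mem hzl, Finset.card_erase_of_mem hzl']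
  have hSL : S ⊆ L := by
    intro m hm
    rw [hS, Finset.mem_image] at hm
    obtain ⟨p, hp, rfl⟩ := hm
    exact (hfspec p hp).1
  have hSnl : l ∉ S := by
    intro hm
    rw [hS, Finset.mem_image] at hm
    obtain ⟨p, hp, heq⟩ := hm
    have := (hfspec p hp).2.2
    rw [heq] at this
    rw [Finset.mem_product] at hp
    have : p.2 ∈ l ∩ l' := Finset.mem_inter.2 ⟨this, Finset.mem_of_mem_erase hp.2⟩
    rw [hint, Finset.mem_singleton] at this
    exact (Finset.ne_of_mem_erase hp.2) this
  have hSnl' : l' ∉ S := by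
    intro hm
    rw [hS, Finset.mem_image] at hm
    obtain ⟨p, hp, heq⟩ := hm
    have := (hfspec p hp).2.1
    rw [heq] at this
    rw [Finset.mem_product] at hp
    have : p.1 ∈ l ∩ l' := Finset.mem_inter.2 ⟨Finset.mem_of_mem_erase hp.1, this⟩
    rw [hint, Finset.mem_singleton] at this
    exact (Finset.ne_of_mem_erase hp.1) this
  have hunion : ({l, l'} : Finset (Finset α)) ∪ S ⊆ L := by
    intro m hm
    rw [Finset.mem_union, Finset.mem_insert, Finset.mem_singleton] at hm
    rcases hm with (rfl | rfl) | hm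
    · exact hl
    · exact hl'
    · exact hSL hm
  have hdisj : Disjoint ({l, l'} : Finset (Finset α)) S := by
    rw [Finset.disjoint_left]
    intro m hm
    rw [Finset.mem_insert, Finset.mem_singleton] at hm
    rcases hm with rfl | rfl
    · exact hSnl
    · exact hSnl'
  have hcard2 : ({l, l'} : Finset (Finset α)).card = 2 := by
    rw [Finset.card_insert_of_notMem (by simpa using hne), Finset.card_singleton]
  have h1 : 2 + (l.card - 1) * (l'.card - 1) ≤ L.card := by
    calc 2 + (l.card - 1) * (l'.card - 1)
        = (({l, l'} : Finset (Finset α)) ∪ S).card := by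
          rw [Finset.card_union_of_disjoint hdisj, hcard2, hScard]
      _ ≤ L.card := Finset.card_le_card hunion
  refine ⟨h1, ?_⟩
  have hPcard : P.card + 1 = l.card + l'.card := by
    have := Finset.card_union_add_card_inter l l'
    rw [hint, Finset.card_singleton, ← hcover] at this
    omega
  rw [hPcard]
  have h3l : 3 ≤ l.card := le_trans h3 hle
  obtain ⟨x, hx⟩ := Nat.exists_eq_add_of_le h3l
  obtain ⟨y, hy⟩ := Nat.exists_eq_add_of_le h3
  rw [hx, hy]
  have e1 : 3 + x - 1 = 2 + x := by omega
  have e2 : 3 + y - 1 = 2 + y := by omega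
  rw [e1, e2]
  nlinarith [Nat.zero_le (x * y)]
end

section
/- Let P be a finite set with n elements and L a linear space on P with m = n lines. Suppose no point lies on n − 1 lines and P is not the union of two intersecting lines. Then every two lines of L intersect. -/
/-!
This is the equality case of de Bruijn–Erdős. Write `k_a` for the number of lines through `a`.
If `a ∉ l`, the lines joining `a` to the points of `l` are distinct, so `|l| ≤ k_a`. Weight each
non-incident pair `(a, l)` once by `1 / (m - k_a)` and once by `1 / (n - |l|)`: the first weights
sum to `n`, the second to `m`. When `m = n`, the inequality `|l| ≤ k_a` makes the first weights
dominate the second termwise, so `k_a = |l|` for every non-incident pair. If two lines `l, l'`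
were disjoint, a point `a ∈ l` would give `|l'| < k_a`, since `l` is a line through `a` that
misses `l'`.
-/

open Finset

namespace Finset

theorem card_bipartiteAbove_eq_card_bipartiteBelow_of_le {α β : Type*} (r : α → β → Prop)
    [∀ a b, Decidable (r a b)] {s : Finset α} {t : Finset β} (hst : #s ≤ #t)
    (hs : ∀ a ∈ s, (t.bipartiteAbove r a).Nonempty)
    (ht : ∀ b ∈ t, (s.bipartiteBelow r b).Nonempty)
    (hle : ∀ a ∈ s, ∀ b ∈ t, r a b →
      #(t.bipartiteAbove r a) ≤ #(s.bipartiteBelow r b)) :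
    ∀ a ∈ s, ∀ b ∈ t, r a b → #(t.bipartiteAbove r a) = #(s.bipartiteBelow r b) := by
  have sum_above : ∀ a ∈ s,
      ∑ _b ∈ t.bipartiteAbove r a, (#(t.bipartiteAbove r a) : ℚ)⁻¹ = 1 := fun a ha => by
    rw [sum_const, nsmul_eq_mul]
    exact mul_inv_cancel₀ (Nat.cast_ne_zero.2 (card_pos.2 (hs a ha)).ne')
  have sum_below : ∀ b ∈ t,
      ∑ _a ∈ s.bipartiteBelow r b, (#(s.bipartiteBelow r b) : ℚ)⁻¹ = 1 := fun b hb => by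
    rw [sum_const, nsmul_eq_mul]
    exact mul_inv_cancel₀ (Nat.cast_ne_zero.2 (card_pos.2 (ht b hb)).ne')
  have inv_le : ∀ a ∈ s, ∀ b ∈ t.bipartiteAbove r a,
      (#(s.bipartiteBelow r b) : ℚ)⁻¹ ≤ (#(t.bipartiteAbove r a) : ℚ)⁻¹ :=
    fun a ha b hb => by
      rw [mem_bipartiteAbove] at hb
      exact inv_anti₀ (Nat.cast_pos.2 (card_pos.2 (hs a ha)))
        (Nat.cast_le.2 (hle a ha b hb.1 hb.2))
  have key : ∑ a ∈ s, ∑ b ∈ t.bipartiteAbove r a, (#(s.bipartiteBelow r b) : ℚ)⁻¹ =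
      ∑ a ∈ s, ∑ _b ∈ t.bipartiteAbove r a, (#(t.bipartiteAbove r a) : ℚ)⁻¹ := by
    refine le_antisymm (sum_le_sum fun a ha => sum_le_sum (inv_le a ha)) ?_
    calc ∑ a ∈ s, ∑ _b ∈ t.bipartiteAbove r a, (#(t.bipartiteAbove r a) : ℚ)⁻¹
        = #s := by rw [sum_congr rfl sum_above]; simp
      _ ≤ #t := Nat.cast_le.2 hst
      _ = ∑ b ∈ t, ∑ _a ∈ s.bipartiteBelow r b, (#(s.bipartiteBelow r b) : ℚ)⁻¹ := by
        rw [sum_congr rfl sum_below]; simp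
      _ = _ := (sum_sum_bipartiteAbove_eq_sum_sum_bipartiteBelow r _).symm
  rw [sum_eq_sum_iff_of_le fun a ha => sum_le_sum (inv_le a ha)] at key
  intro a ha b hb hab
  have := (sum_eq_sum_iff_of_le (inv_le a ha)).1 (key a ha) b
    ((mem_bipartiteAbove r).2 ⟨hb, hab⟩)
  exact_mod_cast (inv_inj.1 this).symm

end Finset

structure IsLinearSpace {α : Type*} (P : Finset α) (L : Finset (Finset α)) : Prop where
  subset : ∀ l ∈ L, l ⊆ P
  two_le_card : ∀ l ∈ L, 2 ≤ #l
  existsUnique_line : ∀ x ∈ P, ∀ y ∈ P, x ≠ y → ∃! l, l ∈ L ∧ x ∈ l ∧ y ∈ l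

namespace IsLinearSpace

variable {α : Type*} {P : Finset α} {L : Finset (Finset α)} {l l' : Finset α} {a : α}

theorem eq_of_mem_of_mem (h : IsLinearSpace P L) (hl : l ∈ L) (hl' : l' ∈ L) {x y : α}
    (hxy : x ≠ y) (hx : x ∈ l) (hy : y ∈ l) (hx' : x ∈ l') (hy' : y ∈ l') : l = l' :=
  (h.existsUnique_line x (h.subset l hl hx) y (h.subset l hl hy) hxy).unique
    ⟨hl, hx, hy⟩ ⟨hl', hx', hy'⟩

theorem eq_of_subset (h : IsLinearSpace P L) (hl : l ∈ L) (hl' : l' ∈ L) (hll' : l ⊆ l') :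
    l = l' := by
  obtain ⟨x, hx, y, hy, hxy⟩ := one_lt_card.1 (h.two_le_card l hl)
  exact h.eq_of_mem_of_mem hl hl' hxy hx hy (hll' hx) (hll' hy)

theorem ne_of_one_lt_card (h : IsLinearSpace P L) (hL : 1 < #L) (hl : l ∈ L) : l ≠ P := by
  rintro rfl
  obtain ⟨m, hm, m', hm', hne⟩ := one_lt_card.1 hL
  exact hne ((h.eq_of_subset hm hl (h.subset m hm)).trans
    (h.eq_of_subset hm' hl (h.subset m' hm')).symm)

variable [DecidableEq α]

theorem card_filter_mem_lt_card (h : IsLinearSpace P L) (ha : a ∈ P) :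
    #{m ∈ L | a ∈ m} < #P := by
  have : #{m ∈ L | a ∈ m} ≤ #(P.erase a) := by
    refine card_le_card_of_forall_subsingleton (fun m b => b ∈ m) ?_ ?_
    · intro m hm
      rw [mem_filter] at hm
      obtain ⟨b, hb, hba⟩ := exists_mem_ne (h.two_le_card m hm.1) a
      exact ⟨b, mem_erase.2 ⟨hba, h.subset m hm.1 hb⟩, hb⟩
    · intro b hb m hm m' hm'
      simp only [Set.mem_ofPred_eq, mem_filter] at hm hm'
      exact h.eq_of_mem_of_mem hm.1.1 hm'.1.1 (ne_of_mem_erase hb).symm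
        hm.1.2 hm.2 hm'.1.2 hm'.2
  rw [card_erase_of_mem ha] at this
  have := card_pos.2 ⟨a, ha⟩
  omega

theorem card_le_card_filter_inter_nonempty (h : IsLinearSpace P L) (ha : a ∈ P) (hl : l ∈ L)
    (hal : a ∉ l) : #l ≤ #{m ∈ L | a ∈ m ∧ (m ∩ l).Nonempty} := by
  refine card_le_card_of_forall_subsingleton (fun b m => b ∈ m) ?_ ?_
  · intro b hb
    obtain ⟨m, ⟨hm, ham, hbm⟩, -⟩ :=
      h.existsUnique_line a ha b (h.subset l hl hb) (ne_of_mem_of_not_mem hb hal).symm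
    exact ⟨m, mem_filter.2 ⟨hm, ham, b, mem_inter.2 ⟨hbm, hb⟩⟩, hbm⟩
  · intro m hm b hb b' hb'
    simp only [Set.mem_ofPred_eq, mem_filter] at hm hb hb'
    by_contra hne
    exact hal (h.eq_of_mem_of_mem hm.1 hl hne hb.2 hb'.2 hb.1 hb'.1 ▸ hm.2.1)

theorem card_le_card_filter_mem (h : IsLinearSpace P L) (ha : a ∈ P) (hl : l ∈ L)
    (hal : a ∉ l) : #l ≤ #{m ∈ L | a ∈ m} :=
  (h.card_le_card_filter_inter_nonempty ha hl hal).trans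
    (card_le_card (monotone_filter_right L fun _ _ hm => hm.1))

theorem card_lt_card_filter_mem (h : IsLinearSpace P L) (ha : a ∈ P) (hl : l ∈ L)
    (hal : a ∉ l) (hl' : l' ∈ L) (hal' : a ∈ l') (hdisj : Disjoint l l') :
    #l < #{m ∈ L | a ∈ m} := by
  have hsub : {m ∈ L | a ∈ m ∧ (m ∩ l).Nonempty} ⊆ {m ∈ L | a ∈ m}.erase l' := by
    intro m hm
    simp only [mem_filter] at hm
    refine mem_erase.2 ⟨?_, mem_filter.2 ⟨hm.1, hm.2.1⟩⟩
    rintro rfl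
    exact not_nonempty_iff_eq_empty.2 (disjoint_iff_inter_eq_empty.1 hdisj.symm) hm.2.2
  have hmem : l' ∈ {m ∈ L | a ∈ m} := mem_filter.2 ⟨hl', hal'⟩
  have := (h.card_le_card_filter_inter_nonempty ha hl hal).trans (card_le_card hsub)
  rw [card_erase_of_mem hmem] at this
  have := card_pos.2 ⟨l', hmem⟩
  omega

theorem card_filter_mem_eq_card (h : IsLinearSpace P L) (hLP : #L = #P) (ha : a ∈ P)
    (hl : l ∈ L) (hal : a ∉ l) : #{m ∈ L | a ∈ m} = #l := by
  have lines_off : ∀ x, #(L.bipartiteAbove (· ∉ ·) x) + #{m ∈ L | x ∈ m} = #L :=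
    fun x => by
      rw [add_comm]
      exact card_filter_add_card_filter_not _
  have points_off : ∀ m ∈ L, #(P.bipartiteBelow (· ∉ ·) m) + #m = #P := fun m hm => by
    have := card_filter_add_card_filter_not (s := P) (· ∈ m)
    rw [filter_mem_eq_inter, inter_eq_right.2 (h.subset m hm)] at this
    rw [add_comm]
    exact this
  have hL : 1 < #L := by have := h.two_le_card l hl; have := card_le_card (h.subset l hl); omega
  have := card_bipartiteAbove_eq_card_bipartiteBelow_of_le
    (fun (x : α) (m : Finset α) => x ∉ m) hLP.ge
    (fun x hx => by
      have := lines_off x; have := h.card_filter_mem_lt_card hx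
      exact card_pos.1 (by omega))
    (fun m hm => by
      have := points_off m hm
      have := card_lt_card ((h.subset m hm).ssubset_of_ne (h.ne_of_one_lt_card hL hm))
      exact card_pos.1 (by omega))
    (fun x hx m hm hxm => by
      have := lines_off x; have := points_off m hm
      have := h.card_le_card_filter_mem hx hm hxm
      omega)
    a ha l hl hal
  have := lines_off a; have := points_off l hl
  omega

end IsLinearSpace

theorem every_two_lines_intersect_case_III_general {α : Type*} [DecidableEq α] (P : Finset α) (L : Finset (Finset α))
    (hsub : ∀ l ∈ L, l ⊆ P)
    (hcard : ∀ l ∈ L, 2 ≤ l.card)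
    (hpair : ∀ x ∈ P, ∀ y ∈ P, x ≠ y → ∃! l, l ∈ L ∧ x ∈ l ∧ y ∈ l)
    (hm : L.card = P.card) :
    ∀ l ∈ L, ∀ l' ∈ L, (l ∩ l').Nonempty := by
  have h : IsLinearSpace P L := ⟨hsub, hcard, hpair⟩
  intro l hl l' hl'
  by_contra hdisj
  rw [not_nonempty_iff_eq_empty, ← disjoint_iff_inter_eq_empty] at hdisj
  obtain ⟨a, ha⟩ : l.Nonempty := card_pos.1 (by have := hcard l hl; omega)
  have haP := hsub l hl ha
  have hal' : a ∉ l' := disjoint_left.1 hdisj ha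
  exact (h.card_lt_card_filter_mem haP hl' hal' hl ha hdisj.symm).ne'
    (h.card_filter_mem_eq_card hm haP hl' hal')

theorem every_two_lines_intersect_case_III {α : Type*} [DecidableEq α] (P : Finset α) (L : Finset (Finset α))
    (hsub : ∀ l ∈ L, l ⊆ P)
    (hproper : ∀ l ∈ L, l ≠ P)
    (hcard : ∀ l ∈ L, 2 ≤ l.card)
    (hpair : ∀ x ∈ P, ∀ y ∈ P, x ≠ y → ∃! l, l ∈ L ∧ x ∈ l ∧ y ∈ l)
    (hm : L.card = P.card)
    (hnopoint : ¬ ∃ a ∈ P, (L.filter (fun l => a ∈ l)).card = P.card - 1)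
    (hnocover : ¬ ∃ l ∈ L, ∃ l' ∈ L, l ≠ l' ∧ (l ∩ l').Nonempty ∧ P = l ∪ l') :
    ∀ l ∈ L, ∀ l' ∈ L, (l ∩ l').Nonempty :=
  every_two_lines_intersect_case_III_general P L hsub hcard hpair hm
end

section
/- Let P be a finite set with n elements and L a linear space on P with m = n lines. Suppose no point lies on n − 1 lines and P is not the union of two intersecting lines. Then for every line l and every point a ∉ l, |l| equals the number of lines through a. -/
theorem line_card_eq_lines_through_external_point {α : Type*} [DecidableEq α] (P : Finset α) (L : Finset (Finset α))
    (hsub : ∀ l ∈ L, l ⊆ P)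
    (hproper : ∀ l ∈ L, l ≠ P)
    (hcard : ∀ l ∈ L, 2 ≤ l.card)
    (hpair : ∀ x ∈ P, ∀ y ∈ P, x ≠ y → ∃! l, l ∈ L ∧ x ∈ l ∧ y ∈ l)
    (hm : L.card = P.card)
    (hnopoint : ¬ ∃ a ∈ P, (L.filter (fun l => a ∈ l)).card = P.card - 1)
    (hnocover : ¬ ∃ l ∈ L, ∃ l' ∈ L, l ≠ l' ∧ (l ∩ l').Nonempty ∧ P = l ∪ l') :
    ∀ l ∈ L, ∀ a ∈ P, a ∉ l → l.card = (L.filter (fun l' => a ∈ l')).card := by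
  classical
  set n := P.card with hn
  set r : α → ℕ := fun a => (L.filter (fun l' => a ∈ l')).card with hrdef
  -- every line has fewer than n points
  have hlt : ∀ l ∈ L, l.card < n := by
    intro l hl
    exact Finset.card_lt_card (lt_of_le_of_ne (hsub l hl) (hproper l hl))
  -- every point is on fewer than n lines
  have hrlt : ∀ a ∈ P, r a < n := by
    intro a ha
    have hle : r a ≤ L.card := Finset.card_filter_le _ _
    rcases lt_or_eq_of_le hle with h | h
    · exact lt_of_lt_of_le h (le_of_eq hm)
    · -- all lines contain a ; derive a contradiction
      exfalso
      have hall : ∀ l ∈ L, a ∈ l := by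
        have : L.filter (fun l' => a ∈ l') = L :=
          Finset.eq_of_subset_of_card_le (Finset.filter_subset _ _) (le_of_eq h.symm)
        intro l hl
        rw [← this] at hl
        exact (Finset.mem_filter.mp hl).2
      have hLne : L.Nonempty := by
        rw [← Finset.card_pos, hm]
        exact Finset.card_pos.mpr ⟨a, ha⟩
      obtain ⟨l, hl⟩ := hLne
      have hal : a ∈ l := hall l hl
      obtain ⟨q, hq, hqa⟩ := Finset.exists_mem_ne (lt_of_lt_of_le one_lt_two (hcard l hl)) a
      have hqP : q ∈ P := hsub l hl hq
      have hPl : P ⊆ l := by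
        intro w hw
        by_cases hwq : w = q
        · exact hwq ▸ hq
        · obtain ⟨l', hl'⟩ := hpair q hqP w hw (fun h => hwq h.symm)
          have hal' : a ∈ l' := hall l' hl'.1.1
          have : l = l' := by
            have huniq := hpair a ha q hqP (Ne.symm hqa)
            exact (huniq.unique ⟨hl, hal, hq⟩ ⟨hl'.1.1, hal', hl'.1.2.1⟩)
          exact this ▸ hl'.1.2.2
      exact hproper l hl (Finset.Subset.antisymm (hsub l hl) hPl)
  -- key: if a ∉ l then l.card ≤ r a
  have hkey : ∀ l ∈ L, ∀ a ∈ P, a ∉ l → l.card ≤ r a := by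
    intro l hl a ha hal
    have : ∀ x ∈ l, ∃ m, m ∈ L ∧ a ∈ m ∧ x ∈ m := by
      intro x hx
      have hxP : x ∈ P := hsub l hl hx
      have hax : a ≠ x := fun h => hal (h ▸ hx)
      obtain ⟨m, hm', _⟩ := hpair a ha x hxP hax
      exact ⟨m, hm'⟩
    set f : α → Finset α := fun x =>
      if h : ∃ m, m ∈ L ∧ a ∈ m ∧ x ∈ m then h.choose else ∅ with hf
    apply Finset.card_le_card_of_injOn f
    · intro x hx
      have hex := this x hx
      simp only [hf, dif_pos hex]
      obtain ⟨h1, h2, _⟩ := hex.choose_spec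
      exact Finset.mem_filter.mpr ⟨h1, h2⟩
    · intro x hx y hy hxy
      by_contra hne
      have hexx := this x hx
      have hexy := this y hy
      have hfx : x ∈ f x := by
        simp only [hf, dif_pos hexx]; exact hexx.choose_spec.2.2
      have hfy : y ∈ f y := by
        simp only [hf, dif_pos hexy]; exact hexy.choose_spec.2.2
      have hfxL : f x ∈ L := by
        simp only [hf, dif_pos hexx]; exact hexx.choose_spec.1
      have hafx : a ∈ f x := by
        simp only [hf, dif_pos hexx]; exact hexx.choose_spec.2.1
      have hyfx : y ∈ f x := hxy ▸ hfy
      have hxP : x ∈ P := hsub l hl hx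
      have hyP : y ∈ P := hsub l hl hy
      have huniq := hpair x hxP y hyP hne
      have : f x = l := huniq.unique ⟨hfxL, hfx, hyfx⟩ ⟨hl, hx, hy⟩
      exact hal (this ▸ hafx)
  -- positivity of denominators
  have hpos1 : ∀ l ∈ L, (0:ℚ) < (n:ℚ) - l.card := by
    intro l hl
    have := hlt l hl
    have : (l.card : ℚ) < n := by exact_mod_cast this
    linarith
  have hpos2 : ∀ a ∈ P, (0:ℚ) < (n:ℚ) - r a := by
    intro a ha
    have := hrlt a ha
    have : (r a : ℚ) < n := by exact_mod_cast this
    linarith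
  -- first double sum
  have claim1 : ∑ l ∈ L, ∑ p ∈ P \ l, (1 / ((n:ℚ) - l.card)) = (n:ℚ) := by
    have : ∀ l ∈ L, ∑ p ∈ P \ l, (1 / ((n:ℚ) - l.card)) = 1 := by
      intro l hl
      rw [Finset.sum_const, Finset.card_sdiff_of_subset (hsub l hl), nsmul_eq_mul]
      have hc : ((n - l.card : ℕ) : ℚ) = (n:ℚ) - l.card := by
        rw [Nat.cast_sub (le_of_lt (hlt l hl))]
      rw [hc, mul_one_div, div_self (ne_of_gt (hpos1 l hl))]
    rw [Finset.sum_congr rfl this, Finset.sum_const, nsmul_eq_mul, mul_one, hm]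
  -- second double sum
  have claim2 : ∑ l ∈ L, ∑ p ∈ P \ l, (1 / ((n:ℚ) - r p)) = (n:ℚ) := by
    have hrw : ∀ l ∈ L, ∑ p ∈ P \ l, (1 / ((n:ℚ) - r p))
        = ∑ p ∈ P, if p ∉ l then (1 / ((n:ℚ) - r p)) else 0 := by
      intro l hl
      rw [← Finset.sum_filter]
      congr 1
      ext p
      simp [Finset.mem_sdiff]
    rw [Finset.sum_congr rfl hrw, Finset.sum_comm]
    have : ∀ p ∈ P, (∑ l ∈ L, if p ∉ l then (1 / ((n:ℚ) - r p)) else 0) = 1 := by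
      intro p hp
      rw [← Finset.sum_filter, Finset.sum_const, nsmul_eq_mul]
      have hcardf : (L.filter (fun l => p ∉ l)).card = n - r p := by
        have := Finset.card_filter_add_card_filter_not (s := L)
          (p := fun l => p ∈ l)
        simp only [hrdef] at *
        omega
      rw [hcardf]
      have hc : ((n - r p : ℕ) : ℚ) = (n:ℚ) - r p := by
        rw [Nat.cast_sub (le_of_lt (hrlt p hp))]
      rw [hc, mul_one_div, div_self (ne_of_gt (hpos2 p hp))]
    rw [Finset.sum_congr rfl this, Finset.sum_const, nsmul_eq_mul, mul_one]
  -- pointwise inequality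
  have hptle : ∀ l ∈ L, ∀ p ∈ P \ l, (1 / ((n:ℚ) - l.card)) ≤ (1 / ((n:ℚ) - r p)) := by
    intro l hl p hp
    obtain ⟨hpP, hpl⟩ := Finset.mem_sdiff.mp hp
    have h1 := hkey l hl p hpP hpl
    have h1' : (l.card : ℚ) ≤ r p := by exact_mod_cast h1
    exact one_div_le_one_div_of_le (hpos2 p hpP) (by linarith)
  -- extract termwise equality
  have houter : ∀ l ∈ L, ∑ p ∈ P \ l, (1 / ((n:ℚ) - l.card))
      = ∑ p ∈ P \ l, (1 / ((n:ℚ) - r p)) := by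
    refine (Finset.sum_eq_sum_iff_of_le ?_).mp (claim1.trans claim2.symm)
    intro l hl
    exact Finset.sum_le_sum (hptle l hl)
  intro l hl a ha hal
  have hmem : a ∈ P \ l := Finset.mem_sdiff.mpr ⟨ha, hal⟩
  have hinner := (Finset.sum_eq_sum_iff_of_le (hptle l hl)).mp (houter l hl) a hmem
  rw [one_div, one_div, inv_inj, sub_right_inj] at hinner
  exact_mod_cast hinner
end

section
/- Let P be a finite set with n elements and L a collection of proper subsets of P, each with at least two elements, such that every two distinct points lie on exactly one member of L. If there is a point z such that L consists of P \ {z} and all pairs {x, z} with x ≠ z, then |L| = n. Likewise if there is k with n = k(k−1)+1, every line has k points, every point lies on k lines, and any two lines meet, then |L| = n. -/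
theorem deBruijnErdos_equality_converse {α : Type*} [DecidableEq α] (P : Finset α) (L : Finset (Finset α))
    (hsub : ∀ l ∈ L, l ⊆ P)
    (hproper : ∀ l ∈ L, l ≠ P)
    (hcard : ∀ l ∈ L, 2 ≤ l.card)
    (hpair : ∀ x ∈ P, ∀ y ∈ P, x ≠ y → ∃! l, l ∈ L ∧ x ∈ l ∧ y ∈ l)
    (hn : 3 ≤ P.card) :
    ((∃ z ∈ P, L = insert (P.erase z) ((P.erase z).image (fun x => ({x, z} : Finset α)))) →
      L.card = P.card) ∧
    ((∃ k : ℕ, P.card = k * (k - 1) + 1 ∧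
      (∀ l ∈ L, l.card = k) ∧
      (∀ a ∈ P, (L.filter (fun l => a ∈ l)).card = k) ∧
      (∀ l ∈ L, ∀ l' ∈ L, (l ∩ l').Nonempty)) →
      L.card = P.card) := by
  constructor
  · rintro ⟨z, hz, rfl⟩
    have hnm : P.erase z ∉ (P.erase z).image (fun x => ({x, z} : Finset α)) := by
      intro h
      obtain ⟨x, hx, hxe⟩ := Finset.mem_image.mp h
      have : z ∈ P.erase z := by
        rw [← hxe]; simp
      simp at this
    rw [Finset.card_insert_of_notMem hnm,
      Finset.card_image_of_injOn, Finset.card_erase_of_mem hz]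
    · have : 0 < P.card := by omega
      omega
    · intro x hx y hy hxy
      have hxz : x ≠ z := Finset.ne_of_mem_erase hx
      have hyz : y ≠ z := Finset.ne_of_mem_erase hy
      have h' : ({x, z} : Finset α) = {y, z} := hxy
      have : x ∈ ({y, z} : Finset α) := by rw [← h']; simp
      simp at this
      tauto
  · rintro ⟨k, hk, hlk, hak, -⟩
    have hLne : L.Nonempty := by
      obtain ⟨x, hx, y, hy, hxy⟩ := Finset.one_lt_card.mp (by omega : 1 < P.card)
      obtain ⟨l, ⟨hl, -⟩, -⟩ := hpair x hx y hy hxy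
      exact ⟨l, hl⟩
    obtain ⟨l₀, hl₀⟩ := hLne
    have hk2 : 2 ≤ k := hlk l₀ hl₀ ▸ hcard l₀ hl₀
    have h1 : ∑ l ∈ L, (P.filter (fun a => a ∈ l)).card
        = ∑ a ∈ P, (L.filter (fun l => a ∈ l)).card := by
      simp_rw [Finset.card_filter]
      exact Finset.sum_comm
    have h2 : ∀ l ∈ L, (P.filter (fun a => a ∈ l)).card = k := by
      intro l hl
      rw [Finset.filter_mem_eq_inter, Finset.inter_comm,
        Finset.inter_eq_left.mpr (hsub l hl)]
      exact hlk l hl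
    rw [Finset.sum_congr rfl h2, Finset.sum_congr rfl hak,
      Finset.sum_const, Finset.sum_const, smul_eq_mul, smul_eq_mul] at h1
    exact Nat.eq_of_mul_eq_mul_right (by omega) h1
end
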